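/- Let k be a commutative ring and p a prime. Let ρ : k[ξ,η] → k[x,y] be the k-algebra homomorphism with ρ(ξ) = x^p and ρ(η) = y^p. Let M be an ideal of k[ξ,η] and let N be the ideal of k[x,y] generated by the image ρ(M). If for some n ≥ 0 the class of ξ^n is nonzero in k[ξ,η]/M (i.e. ξ^n ∉ M), then the class of x^{pn+p−1} is nonzero in k[x,y]/N (i.e. x^{pn+p−1} ∉ N). -/

import Mathlib

/-!
Reading off the coefficients of the monomials `x^(p a + p - 1) y^(p b)` defines a `k`-linear map
`T : k[x,y] → k[ξ,η]` with `T (g * ρ m) = m * T g`: multiplying by `ρ(ξ^a η^b) = x^(pa) y^(pb)`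
shifts exponents by multiples of `p`, and the offset `p - 1 < p` is never crossed. Hence `T` maps
`N`, whose elements are sums `∑ cᵢ ρ(mᵢ)` with `mᵢ ∈ M`, into `M`, while `T (x^(pn+p-1)) = ξ^n`.
-/

open MvPolynomial

namespace Finsupp

variable {σ : Type*}

theorem smul_add_injective (p : ℕ) [NeZero p] (r : σ →₀ ℕ) :
    Function.Injective fun e : σ →₀ ℕ => p • e + r :=
  (add_left_injective r).comp (smul_right_injective _ (NeZero.ne p))

theorem smul_le_smul_add_iff {p : ℕ} {r : σ →₀ ℕ} (hr : ∀ i, r i < p) {d e : σ →₀ ℕ} :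
    p • d ≤ p • e + r ↔ d ≤ e := by
  simp only [le_def, add_apply, smul_apply, smul_eq_mul]
  refine forall_congr' fun i => ⟨fun h => ?_, fun h => ?_⟩
  · exact Nat.le_of_lt_succ <| Nat.lt_of_mul_lt_mul_left <| by
      rw [Nat.mul_succ]; exact h.trans_lt (by have := hr i; omega)
  · exact (Nat.mul_le_mul_left p h).trans (Nat.le_add_right _ _)

end Finsupp

namespace MvPolynomial

variable {σ k : Type*} [CommSemiring k]

noncomputable def shiftedContract (p : ℕ) [NeZero p] (r : σ →₀ ℕ) :
    MvPolynomial σ k →ₗ[k] MvPolynomial σ k :=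
  (AddMonoidAlgebra.coeffLinearEquiv k).symm.toLinearMap ∘ₗ
    Finsupp.lcomapDomain _ (Finsupp.smul_add_injective p r) ∘ₗ
    (AddMonoidAlgebra.coeffLinearEquiv k).toLinearMap

@[simp]
theorem coeff_shiftedContract (p : ℕ) [NeZero p] (r e : σ →₀ ℕ) (g : MvPolynomial σ k) :
    coeff e (shiftedContract p r g) = coeff (p • e + r) g := rfl

theorem shiftedContract_monomial_smul_add (p : ℕ) [NeZero p] (r d : σ →₀ ℕ) (a : k) :
    shiftedContract p r (monomial (p • d + r) a) = monomial d a := by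
  classical
  ext e
  simp only [coeff_shiftedContract, coeff_monomial, (Finsupp.smul_add_injective p r).eq_iff]

section

variable {p : ℕ} [NeZero p] {r : σ →₀ ℕ}

theorem shiftedContract_mul_monomial_smul (hr : ∀ i, r i < p) (g : MvPolynomial σ k)
    (d : σ →₀ ℕ) (a : k) :
    shiftedContract p r (g * monomial (p • d) a) = monomial d a * shiftedContract p r g := by
  ext e
  simp only [coeff_shiftedContract, coeff_mul_monomial', coeff_monomial_mul',
    Finsupp.smul_le_smul_add_iff hr]
  split_ifs with hde
  · obtain ⟨c, rfl⟩ := exists_add_of_le hde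
    rw [add_tsub_cancel_left, smul_add, add_assoc, add_tsub_cancel_left, mul_comm]
  · rfl

theorem shiftedContract_mul_expand (hr : ∀ i, r i < p) (g m : MvPolynomial σ k) :
    shiftedContract p r (g * expand p m) = m * shiftedContract p r g := by
  induction m using MvPolynomial.induction_on' with
  | monomial d a => rw [expand_monomial, shiftedContract_mul_monomial_smul hr]
  | add m₁ m₂ h₁ h₂ => rw [map_add, mul_add, map_add, h₁, h₂, add_mul]

theorem shiftedContract_mem_of_mem_map_expand (hr : ∀ i, r i < p)
    {M : Ideal (MvPolynomial σ k)} {g : MvPolynomial σ k} (hg : g ∈ M.map (expand p)) :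
    shiftedContract p r g ∈ M := by
  obtain ⟨s, c, m, rfl⟩ := Submodule.mem_span_set'.mp hg
  rw [map_sum]
  refine Ideal.sum_mem _ fun i _ => ?_
  obtain ⟨m', hm', hm⟩ := (m i).2
  rw [smul_eq_mul, ← hm, shiftedContract_mul_expand hr]
  exact M.mul_mem_right _ hm'

end

end MvPolynomial

theorem x_pow_not_mem_of_xi_pow_not_mem (k : Type*) [CommRing k] (p : ℕ) (hp : p.Prime)
    (ρ : MvPolynomial (Fin 2) k →ₐ[k] MvPolynomial (Fin 2) k)
    (hρx : ρ (X 0) = X 0 ^ p) (hρy : ρ (X 1) = X 1 ^ p)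
    (M : Ideal (MvPolynomial (Fin 2) k))
    (N : Ideal (MvPolynomial (Fin 2) k)) (hN : N = Ideal.map ρ.toRingHom M)
    (n : ℕ) (hξ : (X 0 : MvPolynomial (Fin 2) k) ^ n ∉ M) :
    (X 0 : MvPolynomial (Fin 2) k) ^ (p * n + p - 1) ∉ N := by
  have : NeZero p := ⟨hp.ne_zero⟩
  have hρ : ρ = expand p := algHom_ext fun i => by
    fin_cases i
    · simpa using hρx
    · simpa using hρy
  have hr : ∀ i, Finsupp.single (0 : Fin 2) (p - 1) i < p := fun i => by
    have := hp.pos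
    rw [Finsupp.single_apply]; split_ifs <;> omega
  have hx : (X 0 : MvPolynomial (Fin 2) k) ^ (p * n + p - 1) =
      monomial (p • Finsupp.single 0 n + Finsupp.single 0 (p - 1)) 1 := by
    rw [X_pow_eq_monomial, Finsupp.smul_single, ← Finsupp.single_add, smul_eq_mul,
      Nat.add_sub_assoc hp.one_le]
  intro hmem
  rw [hN, hρ, hx] at hmem
  have hT := shiftedContract_mem_of_mem_map_expand hr hmem
  rw [shiftedContract_monomial_smul_add, ← X_pow_eq_monomial] at hT
  exact hξ hT
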